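/- arXiv:2111.03961 — 6 statements merged into one kernel-verified Lean document; each statement's English description precedes it below -/
import Mathlib

section
/- Let v_1, …, v_n be unit vectors in ℂ^d and let t_1, …, t_n be non-negative real numbers satisfying ∑_{k=1}^n t_k^2 = 1. Then there exists a unit vector v in ℂ^d such that |⟨v_k, v⟩| ≥ t_k for every k = 1, …, n. -/
/-!
For integer weights `a k` summing to `N`, let `u₀` maximise `Φ x = ∏ k, ‖⟪v k, x⟫‖ ^ a k` on the
unit sphere, so that `Φ x ≤ ‖x‖ ^ N * Φ u₀` everywhere. Write `u₀ = f + β • v m` with `f ⟂ v m`.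
On the complex line `z ↦ f + z • v m` one has `Φ = |z| ^ a m * |G z|` with `G` a polynomial, and
`‖f + z • v m‖² = 1 - |β|² + |z|²`. The maximum modulus principle for `G` on the circles
`|z| = r > |β|`, compared with the value at `z = β`, gives
`r ^ a m ≤ |β| ^ a m * √(1 - |β|² + r²) ^ N`, and letting `r → |β|` yields `a m ≤ N |β|²`.
Real weights `t k ^ 2` are then reached by rounding up and compactness of the sphere.
-/

open Filter Finset Metric Topology
open scoped InnerProductSpace

theorem exists_forall_inner_ne_zero {𝕜 E ι : Type*} [RCLike 𝕜] [NormedAddCommGroup E]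
    [InnerProductSpace 𝕜 E] [Finite ι] {v : ι → E} (hv : ∀ k, v k ≠ 0) :
    ∃ x, ∀ k, inner 𝕜 (v k) x ≠ 0 := by
  by_contra! h
  obtain ⟨k, hk⟩ := Subspace.exists_eq_top_of_iUnion_eq_univ
    (p := fun k => LinearMap.ker (innerₛₗ 𝕜 (v k))) <|
    Set.eq_univ_of_forall fun x => Set.mem_iUnion.2 (h x)
  have hvk := LinearMap.congr_fun (LinearMap.ker_eq_top.1 hk) (v k)
  exact hv k (inner_self_eq_zero.1 hvk)

theorem IsCompact.exists_forall_le_of_forall_le_add {X ι : Type*} [TopologicalSpace X]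
    {K : Set X} (hK : IsCompact K) {f : ι → X → ℝ} (hf : ∀ i, Continuous (f i)) (c : ι → ℝ)
    (h : ∀ ε > 0, ∃ x ∈ K, ∀ i, c i ≤ f i x + ε) : ∃ x ∈ K, ∀ i, c i ≤ f i x := by
  set S : ℕ → Set X := fun N => {x | ∀ i, c i ≤ f i x + 1 / (N + 1)}
  have hS_closed (N : ℕ) : IsClosed (S N) := by
    simp only [S, Set.ofPred_forall]
    exact isClosed_iInter fun i => isClosed_le continuous_const ((hf i).add continuous_const)
  have hS_anti : Antitone S := fun M N hMN x hx i =>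
    (hx i).trans (by gcongr)
  by_contra! hK_miss
  obtain ⟨N, hN⟩ := hK.elim_directed_family_closed S hS_closed
    (Set.eq_empty_of_forall_notMem fun x ⟨hxK, hx⟩ => by
      obtain ⟨i, hi⟩ := hK_miss x hxK
      obtain ⟨N, hN⟩ := exists_nat_one_div_lt (sub_pos.2 hi)
      exact absurd (Set.mem_iInter.1 hx N i) (by linarith))
    hS_anti.directed_ge
  obtain ⟨x, hxK, hx⟩ := h _ Nat.one_div_pos_of_nat
  exact hN.subset ⟨hxK, hx⟩

theorem le_mul_sq_of_forall_pow_le {a A : ℕ} {b : ℝ} (hb : 0 < b)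
    (h : ∀ r > b, r ^ a ≤ b ^ a * √(1 - b ^ 2 + r ^ 2) ^ A) : (a : ℝ) ≤ A * b ^ 2 := by
  have key : ∀ r > b, (a : ℝ) ≤ A * r ^ 2 := by
    intro r hr
    have hr0 : 0 < r := hb.trans hr
    have hgap : 0 < r ^ 2 - b ^ 2 := by nlinarith
    have hq : 0 < 1 - b ^ 2 + r ^ 2 := by linarith
    have hlog := Real.log_le_log (by positivity) (h r hr)
    rw [Real.log_mul (by positivity) (by positivity), Real.log_pow, Real.log_pow, Real.log_pow,
      Real.log_sqrt hq.le] at hlog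
    -- the two elementary bounds `1 - x⁻¹ ≤ log x ≤ x - 1` linearise both sides at `r = b`
    have hq_log : Real.log (1 - b ^ 2 + r ^ 2) ≤ r ^ 2 - b ^ 2 := by
      linarith [Real.log_le_sub_one_of_pos hq]
    have hratio_log : 1 - (r ^ 2 / b ^ 2)⁻¹ ≤ 2 * (Real.log r - Real.log b) := by
      have := Real.one_sub_inv_le_log_of_pos (x := r ^ 2 / b ^ 2) (by positivity)
      rw [Real.log_div (by positivity) (by positivity), Real.log_pow, Real.log_pow] at this
      push_cast at this
      linarith
    have hlin : (a : ℝ) * ((r ^ 2 - b ^ 2) / r ^ 2) ≤ A * (r ^ 2 - b ^ 2) := by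
      have ha : (0 : ℝ) ≤ a := a.cast_nonneg
      have hA : (0 : ℝ) ≤ A := A.cast_nonneg
      calc (a : ℝ) * ((r ^ 2 - b ^ 2) / r ^ 2) = a * (1 - (r ^ 2 / b ^ 2)⁻¹) := by
            field_simp
        _ ≤ a * (2 * (Real.log r - Real.log b)) := by gcongr
        _ ≤ A * Real.log (1 - b ^ 2 + r ^ 2) := by linarith
        _ ≤ A * (r ^ 2 - b ^ 2) := by gcongr
    rw [mul_div_assoc', div_le_iff₀ (by positivity)] at hlin
    nlinarith
  have hcont : Tendsto (fun r : ℝ => (A : ℝ) * r ^ 2) (𝓝[>] b) (𝓝 (A * b ^ 2)) :=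
    (Continuous.tendsto (by fun_prop) b).mono_left nhdsWithin_le_nhds
  exact ge_of_tendsto hcont (eventually_nhdsWithin_of_forall key)

section Line

variable {𝕜 E : Type*} [RCLike 𝕜] [NormedAddCommGroup E] [InnerProductSpace 𝕜 E] {w : E}

theorem inner_sub_smul_add_smul (hw : ‖w‖ = 1) (x : E) (z : 𝕜) :
    ⟪w, x - ⟪w, x⟫_𝕜 • w + z • w⟫_𝕜 = z := by
  simp [inner_add_right, inner_sub_right, inner_smul_right, hw]

theorem norm_sub_smul_add_smul (hw : ‖w‖ = 1) (x : E) (z : 𝕜) :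
    ‖x - ⟪w, x⟫_𝕜 • w + z • w‖ = √(‖x‖ ^ 2 - ‖⟪w, x⟫_𝕜‖ ^ 2 + ‖z‖ ^ 2) := by
  have hperp : ⟪w, x - ⟪w, x⟫_𝕜 • w⟫_𝕜 = 0 := by simpa using inner_sub_smul_add_smul hw x (0 : 𝕜)
  have hpyth (z : 𝕜) : ‖x - ⟪w, x⟫_𝕜 • w + z • w‖ ^ 2 = ‖x - ⟪w, x⟫_𝕜 • w‖ ^ 2 + ‖z‖ ^ 2 := by
    have := norm_add_sq_eq_norm_sq_add_norm_sq_of_inner_eq_zero (𝕜 := 𝕜) (x - ⟪w, x⟫_𝕜 • w)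
      (z • w) (by rw [inner_smul_right, inner_eq_zero_symm.1 hperp, mul_zero])
    rw [norm_smul, hw, mul_one] at this
    linarith
  have hx := hpyth ⟪w, x⟫_𝕜
  rw [sub_add_cancel] at hx
  rw [← Real.sqrt_sq (norm_nonneg _), hpyth]
  congr 1
  linarith

end Line

theorem Complex.norm_le_of_forall_norm_eq_norm_le {F : Type*} [NormedAddCommGroup F]
    [NormedSpace ℂ F] {G : ℂ → F} (hG : Differentiable ℂ G) {r C : ℝ}
    (hC : ∀ z, ‖z‖ = r → ‖G z‖ ≤ C) {z₀ : ℂ} (hz₀ : ‖z₀‖ < r) : ‖G z₀‖ ≤ C := by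
  have hr : r ≠ 0 := ((norm_nonneg _).trans_lt hz₀).ne'
  refine Complex.norm_le_of_forall_mem_frontier_norm_le isBounded_ball hG.diffContOnCl
    (fun z hz => hC z ?_) (subset_closure (mem_ball_zero_iff.2 hz₀))
  rwa [frontier_ball 0 hr, mem_sphere_zero_iff_norm] at hz

section Plank

variable {ι E : Type*} [Fintype ι] [NormedAddCommGroup E] [InnerProductSpace ℂ E]
  (v : ι → E) (a : ι → ℕ)

noncomputable def plankProd (x : E) : ℝ := ∏ k, ‖⟪v k, x⟫_ℂ‖ ^ a k

theorem continuous_plankProd : Continuous (plankProd v a) := by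
  unfold plankProd
  fun_prop

theorem plankProd_smul (c : ℂ) (x : E) :
    plankProd v a (c • x) = ‖c‖ ^ (∑ k, a k) * plankProd v a x := by
  simp only [plankProd, inner_smul_right, norm_mul, mul_pow, prod_mul_distrib,
    prod_pow_eq_pow_sum]

variable {v a}

theorem plankProd_le_of_isMaxOn {u₀ : E} (hmax : IsMaxOn (plankProd v a) (sphere 0 1) u₀)
    (x : E) : plankProd v a x ≤ ‖x‖ ^ (∑ k, a k) * plankProd v a u₀ := by
  rcases eq_or_ne x 0 with rfl | hx
  · rw [← zero_smul ℂ u₀, plankProd_smul, norm_smul, norm_zero, zero_mul]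
  have hx_norm : (‖x‖ : ℂ) ≠ 0 := by exact_mod_cast norm_ne_zero_iff.2 hx
  have hu : (‖x‖ : ℂ)⁻¹ • x ∈ sphere (0 : E) 1 := by
    rw [mem_sphere_zero_iff_norm, norm_smul, norm_inv, Complex.norm_real, norm_norm,
      inv_mul_cancel₀ (norm_ne_zero_iff.2 hx)]
  calc plankProd v a x = plankProd v a ((‖x‖ : ℂ) • (‖x‖ : ℂ)⁻¹ • x) := by
        rw [smul_inv_smul₀ hx_norm]
    _ ≤ ‖x‖ ^ (∑ k, a k) * plankProd v a u₀ := by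
        rw [plankProd_smul, Complex.norm_real, norm_norm]
        gcongr
        exact hmax hu

theorem plankProd_pos_of_isMaxOn (hv : ∀ k, v k ≠ 0) {u₀ : E}
    (hmax : IsMaxOn (plankProd v a) (sphere 0 1) u₀) : 0 < plankProd v a u₀ := by
  obtain ⟨w, hw⟩ := exists_forall_inner_ne_zero (𝕜 := ℂ) hv
  have hw_pos : 0 < plankProd v a w := prod_pos fun k _ => pow_pos (norm_pos_iff.2 (hw k)) _
  exact pos_of_mul_pos_right (hw_pos.trans_le (plankProd_le_of_isMaxOn hmax w)) (by positivity)

theorem pow_mul_plankProd_le {u₀ : E} (hu₀ : ‖u₀‖ = 1)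
    (hbound : ∀ x, plankProd v a x ≤ ‖x‖ ^ (∑ k, a k) * plankProd v a u₀)
    {m : ι} (hvm : ‖v m‖ = 1) {r : ℝ} (hr : ‖⟪v m, u₀⟫_ℂ‖ < r) :
    r ^ a m * plankProd v a u₀ ≤
      ‖⟪v m, u₀⟫_ℂ‖ ^ a m * √(1 - ‖⟪v m, u₀⟫_ℂ‖ ^ 2 + r ^ 2) ^ (∑ k, a k) *
        plankProd v a u₀ := by
  classical
  set β := ⟪v m, u₀⟫_ℂ
  set line : ℂ → E := fun z => u₀ - β • v m + z • v m
  set G : ℂ → ℂ := fun z => ∏ k ∈ univ.erase m, ⟪v k, line z⟫_ℂ ^ a k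
  have hG : Differentiable ℂ G := Differentiable.fun_finsetProd fun k _ =>
    ((innerSL ℂ (v k)).differentiable.comp
      (differentiable_const _ |>.add (differentiable_id.smul_const _))).pow _
  have hplankProd_line (z : ℂ) : plankProd v a (line z) = ‖z‖ ^ a m * ‖G z‖ := by
    simp only [plankProd, G, norm_prod, norm_pow]
    rw [← mul_prod_erase univ _ (mem_univ m), inner_sub_smul_add_smul hvm]
  have hline_norm (z : ℂ) : ‖line z‖ = √(1 - ‖β‖ ^ 2 + ‖z‖ ^ 2) := by
    rw [norm_sub_smul_add_smul hvm, hu₀, one_pow]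
  have hr0 : 0 < r := (norm_nonneg _).trans_lt hr
  have hG_circle (z : ℂ) (hz : ‖z‖ = r) :
      ‖(r : ℂ) ^ a m * G z‖ ≤ √(1 - ‖β‖ ^ 2 + r ^ 2) ^ (∑ k, a k) * plankProd v a u₀ := by
    rw [norm_mul, norm_pow, Complex.norm_real, Real.norm_of_nonneg hr0.le, ← hz,
      ← hplankProd_line, ← hline_norm]
    exact hbound _
  calc r ^ a m * plankProd v a u₀ = ‖β‖ ^ a m * ‖(r : ℂ) ^ a m * G β‖ := by
        rw [← sub_add_cancel u₀ (β • v m), hplankProd_line, norm_mul, norm_pow,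
          Complex.norm_real, Real.norm_of_nonneg hr0.le]
        ring
    _ ≤ _ := by
        rw [mul_assoc]
        gcongr
        exact Complex.norm_le_of_forall_norm_eq_norm_le (hG.const_mul _) hG_circle hr

theorem le_sum_mul_norm_inner_sq_of_isMaxOn (hv : ∀ k, ‖v k‖ = 1) {u₀ : E} (hu₀ : ‖u₀‖ = 1)
    (hmax : IsMaxOn (plankProd v a) (sphere 0 1) u₀) (m : ι) :
    (a m : ℝ) ≤ (∑ k, a k) * ‖⟪v m, u₀⟫_ℂ‖ ^ 2 := by
  have hpos := plankProd_pos_of_isMaxOn (fun k => norm_ne_zero_iff.1 ((hv k).trans_ne one_ne_zero))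
    hmax
  rcases Nat.eq_zero_or_pos (a m) with ham | ham
  · rw [ham, Nat.cast_zero]
    positivity
  have hβ : ⟪v m, u₀⟫_ℂ ≠ 0 := fun hβ =>
    hpos.ne' (prod_eq_zero (mem_univ m) (by rw [hβ, norm_zero, zero_pow ham.ne']))
  refine le_mul_sq_of_forall_pow_le (norm_pos_iff.2 hβ) fun r hr => le_of_mul_le_mul_right ?_ hpos
  exact pow_mul_plankProd_le hu₀ (plankProd_le_of_isMaxOn hmax) (hv m) hr

theorem exists_norm_eq_one_forall_le_sum_mul_norm_inner_sq [FiniteDimensional ℂ E] [Nonempty ι]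
    (hv : ∀ k, ‖v k‖ = 1) (a : ι → ℕ) :
    ∃ u : E, ‖u‖ = 1 ∧ ∀ k, (a k : ℝ) ≤ (∑ k, a k) * ‖⟪v k, u⟫_ℂ‖ ^ 2 := by
  have hv₀ : v (Classical.arbitrary ι) ∈ sphere (0 : E) 1 := mem_sphere_zero_iff_norm.2 (hv _)
  obtain ⟨u₀, hu₀, hmax⟩ :=
    (isCompact_sphere (0 : E) 1).exists_isMaxOn ⟨_, hv₀⟩ (continuous_plankProd v a).continuousOn
  rw [mem_sphere_zero_iff_norm] at hu₀
  exact ⟨u₀, hu₀, le_sum_mul_norm_inner_sq_of_isMaxOn hv hu₀ hmax⟩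

theorem exists_norm_eq_one_forall_le_norm_inner_sq_add [FiniteDimensional ℂ E]
    (hv : ∀ k, ‖v k‖ = 1) {s : ι → ℝ} (hs : ∀ k, 0 ≤ s k) (hsum : ∑ k, s k = 1) {ε : ℝ}
    (hε : 0 < ε) : ∃ u : E, ‖u‖ = 1 ∧ ∀ k, s k ≤ ‖⟪v k, u⟫_ℂ‖ ^ 2 + ε := by
  have : Nonempty ι := by
    by_contra! hι
    simp at hsum
  obtain ⟨N, hN⟩ := exists_nat_gt (Fintype.card ι / ε)
  have hN_pos : (0 : ℝ) < N := lt_of_le_of_lt (by positivity) hN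
  have hcard : (Fintype.card ι : ℝ) < ε * N := by rwa [div_lt_iff₀ hε, mul_comm] at hN
  obtain ⟨u, hu, hle⟩ := exists_norm_eq_one_forall_le_sum_mul_norm_inner_sq hv (⌈s · * N⌉₊)
  have hsum_ceil : ((∑ k, ⌈s k * N⌉₊ : ℕ) : ℝ) ≤ N + Fintype.card ι := by
    push_cast
    calc (∑ k, (⌈s k * N⌉₊ : ℝ)) ≤ ∑ k, (s k * N + 1) :=
          sum_le_sum fun k _ => (Nat.ceil_lt_add_one (mul_nonneg (hs k) hN_pos.le)).le
      _ = N + Fintype.card ι := by simp [sum_add_distrib, ← sum_mul, hsum]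
  refine ⟨u, hu, fun k => ?_⟩
  have hinner_le : ‖⟪v k, u⟫_ℂ‖ ^ 2 ≤ 1 := by
    have := norm_inner_le_norm (𝕜 := ℂ) (v k) u
    rw [hv k, hu, one_mul] at this
    exact pow_le_one₀ (norm_nonneg _) this
  have : s k * N < (‖⟪v k, u⟫_ℂ‖ ^ 2 + ε) * N := by
    calc s k * N ≤ ⌈s k * N⌉₊ := Nat.le_ceil _
      _ ≤ ((∑ k, ⌈s k * N⌉₊ : ℕ) : ℝ) * ‖⟪v k, u⟫_ℂ‖ ^ 2 := hle k
      _ ≤ (N + Fintype.card ι) * ‖⟪v k, u⟫_ℂ‖ ^ 2 := by gcongr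
      _ < (‖⟪v k, u⟫_ℂ‖ ^ 2 + ε) * N := by nlinarith
  exact (lt_of_mul_lt_mul_right this hN_pos.le).le

theorem exists_norm_eq_one_forall_le_norm_inner_sq [FiniteDimensional ℂ E]
    (hv : ∀ k, ‖v k‖ = 1) {s : ι → ℝ} (hs : ∀ k, 0 ≤ s k) (hsum : ∑ k, s k = 1) :
    ∃ u : E, ‖u‖ = 1 ∧ ∀ k, s k ≤ ‖⟪v k, u⟫_ℂ‖ ^ 2 := by
  obtain ⟨u, hu, hle⟩ := (isCompact_sphere (0 : E) 1).exists_forall_le_of_forall_le_add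
    (f := fun k u => ‖⟪v k, u⟫_ℂ‖ ^ 2) (fun k => by fun_prop) s fun ε hε => by
      obtain ⟨u, hu, hle⟩ := exists_norm_eq_one_forall_le_norm_inner_sq_add hv hs hsum hε
      exact ⟨u, mem_sphere_zero_iff_norm.2 hu, hle⟩
  exact ⟨u, mem_sphere_zero_iff_norm.1 hu, hle⟩

end Plank

/-- **Ball's complex plank theorem.** If `v 0, …, v (n-1)` are unit vectors in `ℂ^d` and
`t 0, …, t (n-1)` are non-negative reals with `∑ k, t k ^ 2 = 1`, then there is a unit
vector `u` with `|⟨v k, u⟩| ≥ t k` for every `k`. -/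
theorem complex_plank_theorem (n d : ℕ) (v : Fin n → EuclideanSpace ℂ (Fin d))
    (hv : ∀ k, ‖v k‖ = 1) (t : Fin n → ℝ) (ht : ∀ k, 0 ≤ t k)
    (htsum : ∑ k, t k ^ 2 = 1) :
    ∃ u : EuclideanSpace ℂ (Fin d), ‖u‖ = 1 ∧ ∀ k, t k ≤ ‖(inner ℂ (v k) u : ℂ)‖ := by
  obtain ⟨u, hu, hle⟩ :=
    exists_norm_eq_one_forall_le_norm_inner_sq hv (fun k => sq_nonneg (t k)) htsum
  exact ⟨u, hu, fun k => (pow_le_pow_iff_left₀ (ht k) (norm_nonneg _) two_ne_zero).1 (hle k)⟩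
end

section
/- Let v_1, …, v_n be unit vectors in ℂ^d with d ≥ 1. Then there exists a unit vector v in ℂ^d such that |⟨v_k, v⟩| ≥ 1/√n for every k = 1, …, n. -/
/-!
Let `u` maximize `P(u) = ∏ⱼ |⟨vⱼ, u⟩|` on the unit sphere, put `a = ⟨v_k, u⟩` and let `w` be a
unit vector orthogonal to `u` in the span of `u` and `v_k`. By homogeneity of `P`, the polynomial
`p(ζ) = ∏ⱼ ⟨vⱼ, u + ζ w⟩` satisfies `|p(ζ)| ≤ |p(0)| (1 + |ζ|²)^{n/2}`, and it vanishes at a point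
`ζ₀` with `|ζ₀|² = |a|² / (1 - |a|²)`. A Möbius isometry of the Fubini–Study metric moves `ζ₀`
to the origin without changing the shape of the bound, and Schwarz's lemma on the disc of radius
`(n - 1)^{-1/2}` then forces `|ζ₀|² ≥ 1 / (n - 1)`, that is `|a|² ≥ 1 / n`.
-/

open Metric
open scoped ComplexConjugate InnerProductSpace

namespace ComplexPlank

lemma mul_one_add_pow_lt {n : ℕ} (hn : 2 ≤ n) {x c : ℝ} (hc : ((n : ℝ) - 1) * c ≤ 1)
    (hx : 0 < x) (hxc : x < c) : x * (1 + c) ^ n < c * (1 + x) ^ n := by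
  have hn' : (2 : ℝ) ≤ n := by exact_mod_cast hn
  have hc1 : 0 < 1 + c := by linarith
  set s := (x - c) / (1 + c) with hs_def
  have hs : 1 + s = (1 + x) / (1 + c) := by rw [hs_def]; field_simp; ring
  have hbernoulli : 1 + n * s < (1 + s) ^ n := by
    have := one_add_mul_self_lt_rpow_one_add (s := s) (p := n) ?_ ?_ (by linarith)
    · rwa [Real.rpow_natCast] at this
    · rw [hs_def, le_div_iff₀ hc1]; linarith
    · exact div_ne_zero (by linarith) hc1.ne'
  have hxs : x ≤ c * (1 + n * s) := by
    rw [← sub_nonneg]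
    have : c * (1 + n * s) - x = (c - x) * (1 + c - n * c) / (1 + c) := by
      rw [hs_def]; field_simp; ring
    rw [this]
    apply div_nonneg (mul_nonneg _ _) hc1.le <;> nlinarith
  calc x * (1 + c) ^ n ≤ c * (1 + n * s) * (1 + c) ^ n := by gcongr
    _ < c * (1 + s) ^ n * (1 + c) ^ n := by gcongr; linarith
    _ = c * (1 + x) ^ n := by rw [hs, div_pow]; field_simp

lemma norm_one_add_conj_mul_sq_add_norm_sub_sq (b ζ : ℂ) :
    ‖1 + conj b * ζ‖ ^ 2 + ‖b - ζ‖ ^ 2 = (1 + ‖b‖ ^ 2) * (1 + ‖ζ‖ ^ 2) := by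
  simp only [Complex.sq_norm, Complex.normSq_apply, Complex.add_re, Complex.add_im,
    Complex.mul_re, Complex.mul_im, Complex.sub_re, Complex.sub_im, Complex.conj_re,
    Complex.conj_im, Complex.one_re, Complex.one_im]
  ring

lemma norm_mul_le_of_apply_zero_eq_zero {F : Type*} [NormedAddCommGroup F] [NormedSpace ℂ F]
    [CompleteSpace F] {f : ℂ → F} (hf : Differentiable ℂ f) (h0 : f 0 = 0) {R C : ℝ} (hR : 0 < R)
    (hC : ∀ ζ : ℂ, ‖ζ‖ = R → ‖f ζ‖ ≤ C) {z : ℂ} (hz : ‖z‖ ≤ R) : ‖f z‖ * R ≤ C * ‖z‖ := by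
  have hfactor : ∀ ζ, f ζ = ζ • dslope f 0 ζ := fun ζ => by
    simpa [h0] using (sub_smul_dslope f 0 ζ).symm
  have hg : Differentiable ℂ (dslope f 0) := fun ζ =>
    ((Complex.differentiableOn_dslope Filter.univ_mem).mpr hf.differentiableOn ζ
      trivial).differentiableAt Filter.univ_mem
  have hsphere : ∀ ζ ∈ frontier (ball (0 : ℂ) R), ‖dslope f 0 ζ‖ ≤ C / R := by
    intro ζ hζ
    rw [frontier_ball 0 hR.ne', mem_sphere_zero_iff_norm] at hζ
    rw [le_div_iff₀ hR, mul_comm, ← hζ, ← norm_smul, ← hfactor]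
    exact hC ζ hζ
  have hz' : z ∈ closure (ball (0 : ℂ) R) := by
    rwa [closure_ball 0 hR.ne', mem_closedBall_zero_iff]
  have := Complex.norm_le_of_forall_mem_frontier_norm_le isBounded_ball hg.diffContOnCl hsphere hz'
  rw [hfactor, norm_smul]
  rw [le_div_iff₀ hR] at this
  nlinarith [norm_nonneg z]

variable {n : ℕ} {α β : Fin n → ℂ}

/-- `ζ ↦ (b - ζ) / (1 + b̄ ζ)` is an isometry of the Fubini–Study metric, so the bound survives
the substitution up to the factor `(1 + |b|²)^{n/2}`. -/
lemma norm_prod_moebius_le {M : ℝ}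
    (hbound : ∀ ζ : ℂ, ‖∏ j, (α j + ζ * β j)‖ ≤ M * √(1 + ‖ζ‖ ^ 2) ^ n) (b : ℂ) {ζ : ℂ}
    (hζ : 1 + conj b * ζ ≠ 0) :
    ‖∏ j, (α j * (1 + conj b * ζ) + β j * (b - ζ))‖ ≤
      M * √((1 + ‖b‖ ^ 2) * (1 + ‖ζ‖ ^ 2)) ^ n := by
  set s := 1 + conj b * ζ
  set w := (b - ζ) / s
  have hfactor : ∏ j, (α j * s + β j * (b - ζ)) = s ^ n * ∏ j, (α j + w * β j) := by
    rw [← Fin.prod_const, ← Finset.prod_mul_distrib]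
    refine Finset.prod_congr rfl fun j _ => ?_
    simp only [w]
    field_simp
  have hsw : ‖s‖ * √(1 + ‖w‖ ^ 2) = √((1 + ‖b‖ ^ 2) * (1 + ‖ζ‖ ^ 2)) := by
    have hnorm : ‖s‖ * ‖w‖ = ‖b - ζ‖ := by
      rw [← norm_mul, mul_div_cancel₀ _ hζ]
    rw [← Real.sqrt_sq (norm_nonneg s), ← Real.sqrt_mul (sq_nonneg _),
      ← norm_one_add_conj_mul_sq_add_norm_sub_sq, ← hnorm]
    congr 1
    ring
  calc ‖∏ j, (α j * s + β j * (b - ζ))‖ = ‖s‖ ^ n * ‖∏ j, (α j + w * β j)‖ := by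
        rw [hfactor, norm_mul, norm_pow]
    _ ≤ ‖s‖ ^ n * (M * √(1 + ‖w‖ ^ 2) ^ n) := by gcongr; exact hbound w
    _ = M * (‖s‖ * √(1 + ‖w‖ ^ 2)) ^ n := by ring
    _ = M * √((1 + ‖b‖ ^ 2) * (1 + ‖ζ‖ ^ 2)) ^ n := by rw [hsw]

lemma sq_mul_one_add_sq_pow_le (hP : 0 < ∏ j, ‖α j‖)
    (hbound : ∀ ζ : ℂ, ‖∏ j, (α j + ζ * β j)‖ ≤ (∏ j, ‖α j‖) * √(1 + ‖ζ‖ ^ 2) ^ n) {b : ℂ}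
    (hroot : ∏ j, (α j + b * β j) = 0) {R : ℝ} (hR : 0 < R) (hbR : ‖b‖ ≤ R)
    (hbR1 : ‖b‖ * R < 1) : R ^ 2 * (1 + ‖b‖ ^ 2) ^ n ≤ ‖b‖ ^ 2 * (1 + R ^ 2) ^ n := by
  set M := ∏ j, ‖α j‖
  set f : ℂ → ℂ := fun ζ => ∏ j, (α j * (1 + conj b * ζ) + β j * (b - ζ))
  have hf : Differentiable ℂ f := by fun_prop
  have hf0 : f 0 = 0 := by
    convert hroot using 2 with j
    ring
  have hsphere : ∀ ζ : ℂ, ‖ζ‖ = R → ‖f ζ‖ ≤ M * √((1 + ‖b‖ ^ 2) * (1 + R ^ 2)) ^ n := by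
    intro ζ hζ
    rw [← hζ]
    refine norm_prod_moebius_le hbound b fun h => ?_
    have : ‖conj b * ζ‖ = 1 := by rw [eq_neg_of_add_eq_zero_right h, norm_neg, norm_one]
    rw [norm_mul, Complex.norm_conj, hζ] at this
    linarith
  have hfb : ‖f b‖ = (1 + ‖b‖ ^ 2) ^ n * M := by
    have : ∀ j, α j * (1 + conj b * b) + β j * (b - b) = (1 + ‖b‖ ^ 2 : ℝ) * α j := by
      intro j
      rw [Complex.conj_mul', sub_self]
      push_cast
      ring
    simp only [f, this, Finset.prod_mul_distrib, Fin.prod_const, norm_mul, norm_pow, norm_prod,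
      Complex.norm_real, Real.norm_of_nonneg (by positivity : (0 : ℝ) ≤ 1 + ‖b‖ ^ 2)]
    rfl
  have hschwarz := norm_mul_le_of_apply_zero_eq_zero hf hf0 hR hsphere hbR
  rw [hfb] at hschwarz
  have h : (1 + ‖b‖ ^ 2) ^ n * R ≤ √((1 + ‖b‖ ^ 2) * (1 + R ^ 2)) ^ n * ‖b‖ :=
    le_of_mul_le_mul_left (by linarith) hP
  have hsqrt :
      (√((1 + ‖b‖ ^ 2) * (1 + R ^ 2)) ^ n) ^ 2 = (1 + ‖b‖ ^ 2) ^ n * (1 + R ^ 2) ^ n := by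
    rw [← pow_mul, mul_comm n, pow_mul, Real.sq_sqrt (by positivity), mul_pow]
  have hsq := pow_le_pow_left₀ (by positivity) h 2
  rw [mul_pow, mul_pow, hsqrt] at hsq
  refine le_of_mul_le_mul_left ?_ (by positivity : 0 < (1 + ‖b‖ ^ 2) ^ n)
  linarith

lemma one_le_sub_one_mul_norm_sq (hn : 2 ≤ n) (hP : 0 < ∏ j, ‖α j‖)
    (hbound : ∀ ζ : ℂ, ‖∏ j, (α j + ζ * β j)‖ ≤ (∏ j, ‖α j‖) * √(1 + ‖ζ‖ ^ 2) ^ n) {b : ℂ}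
    (hroot : ∏ j, (α j + b * β j) = 0) : 1 ≤ ((n : ℝ) - 1) * ‖b‖ ^ 2 := by
  by_contra! hlt
  have hn' : (1 : ℝ) ≤ (n : ℝ) - 1 := by
    have : (2 : ℝ) ≤ n := by exact_mod_cast hn
    linarith
  -- `1 / (n - 1)` is where `t ↦ t / (1 + t) ^ n` attains its maximum.
  set c := 1 / ((n : ℝ) - 1)
  have hc : ((n : ℝ) - 1) * c = 1 := mul_one_div_cancel (by linarith)
  have hc1 : c ≤ 1 := by simp only [c]; rw [div_le_one₀ (by linarith)]; exact hn'
  have hb : b ≠ 0 := by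
    rintro rfl
    simp only [zero_mul, add_zero] at hroot
    rw [← norm_prod, hroot, norm_zero] at hP
    exact hP.false
  have hx : 0 < ‖b‖ ^ 2 := by positivity
  have hxc : ‖b‖ ^ 2 < c := lt_of_mul_lt_mul_left (hlt.trans_eq hc.symm) (by linarith)
  have hc0 : 0 < c := hx.trans hxc
  have hbR : ‖b‖ < √c := Real.lt_sqrt_of_sq_lt hxc
  have hbR1 : ‖b‖ * √c < 1 := by
    calc ‖b‖ * √c < √c * √c := by gcongr
      _ = c := Real.mul_self_sqrt hc0.le
      _ ≤ 1 := hc1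
  have h := sq_mul_one_add_sq_pow_le hP hbound hroot (Real.sqrt_pos.mpr hc0) hbR.le hbR1
  rw [Real.sq_sqrt hc0.le] at h
  exact (mul_one_add_pow_lt hn hc.le hx hxc).not_ge (by linarith)

section InnerProductSpace

variable {E : Type*} [NormedAddCommGroup E] [InnerProductSpace ℂ E] (v : Fin n → E)

noncomputable def prodNormInner (y : E) : ℝ := ∏ j, ‖⟪v j, y⟫_ℂ‖

lemma prodNormInner_smul (c : ℂ) (y : E) :
    prodNormInner v (c • y) = ‖c‖ ^ n * prodNormInner v y := by
  simp [prodNormInner, Finset.prod_mul_distrib]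

lemma continuous_prodNormInner : Continuous (prodNormInner v) := by
  unfold prodNormInner
  fun_prop

lemma exists_prodNormInner_pos (hv : ∀ j, v j ≠ 0) : ∃ y, 0 < prodNormInner v y := by
  have hcover : ⋃ j, ((ℂ ∙ v j)ᗮ : Set E) ≠ Set.univ := by
    intro h
    obtain ⟨j, hj⟩ := Subspace.exists_eq_top_of_iUnion_eq_univ h
    have : v j ∈ (ℂ ∙ v j)ᗮ := hj ▸ Submodule.mem_top
    exact hv j (inner_self_eq_zero.mp (Submodule.mem_orthogonal_singleton_iff_inner_right.mp this))
  obtain ⟨y, hy⟩ := (Set.ne_univ_iff_exists_notMem _).mp hcover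
  simp only [Set.mem_iUnion, SetLike.mem_coe, Submodule.mem_orthogonal_singleton_iff_inner_right,
    not_exists] at hy
  exact ⟨y, Finset.prod_pos fun j _ => norm_pos_iff.mpr (hy j)⟩

variable {v}

lemma prodNormInner_le_of_isMaxOn {u : E} (hmax : IsMaxOn (prodNormInner v) (sphere 0 1) u)
    (y : E) : prodNormInner v y ≤ prodNormInner v u * ‖y‖ ^ n := by
  rcases eq_or_ne y 0 with rfl | hy
  · have := prodNormInner_smul v 0 u
    rw [zero_smul, norm_zero] at this
    rw [this, norm_zero, mul_comm]
  · have hy' : ‖y‖ ≠ 0 := norm_ne_zero_iff.mpr hy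
    have hunit : ((‖y‖⁻¹ : ℝ) : ℂ) • y ∈ sphere (0 : E) 1 := by
      simp [norm_smul, hy']
    calc prodNormInner v y = prodNormInner v ((‖y‖ : ℂ) • ((‖y‖⁻¹ : ℝ) : ℂ) • y) := by
          rw [smul_smul, Complex.ofReal_inv, mul_inv_cancel₀ (by exact_mod_cast hy'), one_smul]
      _ = ‖y‖ ^ n * prodNormInner v (((‖y‖⁻¹ : ℝ) : ℂ) • y) := by
          rw [prodNormInner_smul, Complex.norm_real, Real.norm_of_nonneg (norm_nonneg y)]
      _ ≤ ‖y‖ ^ n * prodNormInner v u := by gcongr; exact isMaxOn_iff.mp hmax _ hunit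
      _ = prodNormInner v u * ‖y‖ ^ n := mul_comm _ _

lemma norm_prod_inner_add_mul_le {u w : E} (hu : ‖u‖ = 1) (hw : ‖w‖ = 1) (huw : ⟪u, w⟫_ℂ = 0)
    (hle : ∀ y, prodNormInner v y ≤ prodNormInner v u * ‖y‖ ^ n) (ζ : ℂ) :
    ‖∏ j, (⟪v j, u⟫_ℂ + ζ * ⟪v j, w⟫_ℂ)‖ ≤ prodNormInner v u * √(1 + ‖ζ‖ ^ 2) ^ n := by
  have hnorm : ‖u + ζ • w‖ = √(1 + ‖ζ‖ ^ 2) := by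
    have horth : ⟪u, ζ • w⟫_ℂ = 0 := by rw [inner_smul_right, huw, mul_zero]
    rw [← Real.sqrt_mul_self (norm_nonneg _),
      norm_add_sq_eq_norm_sq_add_norm_sq_of_inner_eq_zero _ _ horth, norm_smul, hu, hw]
    congr 1
    ring
  calc ‖∏ j, (⟪v j, u⟫_ℂ + ζ * ⟪v j, w⟫_ℂ)‖ = prodNormInner v (u + ζ • w) := by
        simp [prodNormInner]
    _ ≤ prodNormInner v u * ‖u + ζ • w‖ ^ n := hle _
    _ = prodNormInner v u * √(1 + ‖ζ‖ ^ 2) ^ n := by rw [hnorm]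

lemma exists_norm_eq_one_inner_eq_zero_inner_eq {u x : E} (hu : ‖u‖ = 1) (hx : ‖x‖ = 1)
    (hlt : ‖⟪x, u⟫_ℂ‖ < 1) :
    ∃ w : E, ‖w‖ = 1 ∧ ⟪u, w⟫_ℂ = 0 ∧ ⟪x, w⟫_ℂ = √(1 - ‖⟪x, u⟫_ℂ‖ ^ 2) := by
  set p := x - ⟪u, x⟫_ℂ • u
  have hup : ⟪u, p⟫_ℂ = 0 := by
    rw [inner_sub_right, inner_smul_right, inner_self_eq_norm_sq_to_K, hu]
    simp
  have hxp : ⟪x, p⟫_ℂ = ((1 - ‖⟪x, u⟫_ℂ‖ ^ 2 : ℝ) : ℂ) := by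
    rw [inner_sub_right, inner_smul_right, inner_self_eq_norm_sq_to_K, hx, ← inner_conj_symm u x,
      Complex.conj_mul']
    push_cast
    ring
  have hpp : ‖p‖ ^ 2 = 1 - ‖⟪x, u⟫_ℂ‖ ^ 2 := by
    have : ⟪p, p⟫_ℂ = ⟪x, p⟫_ℂ := by
      rw [inner_sub_left, inner_smul_left, hup, mul_zero, sub_zero]
    rw [← inner_self_eq_norm_sq (𝕜 := ℂ), RCLike.re_to_complex, this, hxp, Complex.ofReal_re]
  have hp : ‖p‖ = √(1 - ‖⟪x, u⟫_ℂ‖ ^ 2) := by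
    rw [← hpp, Real.sqrt_sq (norm_nonneg p)]
  have hp0 : ‖p‖ ≠ 0 := by
    rw [hp]
    exact (Real.sqrt_pos.mpr (sub_pos.mpr ((sq_lt_one_iff₀ (norm_nonneg _)).mpr hlt))).ne'
  refine ⟨((‖p‖⁻¹ : ℝ) : ℂ) • p, ?_, ?_, ?_⟩
  · rw [norm_smul, Complex.norm_real, Real.norm_of_nonneg (inv_nonneg.mpr (norm_nonneg p)),
      inv_mul_cancel₀ hp0]
  · rw [inner_smul_right, hup, mul_zero]
  · rw [inner_smul_right, hxp, ← Complex.ofReal_mul, ← hp, ← hpp]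
    congr 1
    field_simp

theorem one_div_sqrt_le_norm_inner_of_isMaxOn (hv : ∀ j, ‖v j‖ = 1) {u : E}
    (hu : u ∈ sphere 0 1) (hmax : IsMaxOn (prodNormInner v) (sphere 0 1) u) (k : Fin n) :
    1 / √n ≤ ‖⟪v k, u⟫_ℂ‖ := by
  set a := ⟪v k, u⟫_ℂ
  have hn : 0 < n := k.pos
  suffices h : 1 ≤ n * ‖a‖ ^ 2 by
    rw [div_le_iff₀ (by positivity), ← Real.sqrt_sq (norm_nonneg a),
      ← Real.sqrt_mul' _ n.cast_nonneg]
    exact Real.one_le_sqrt.mpr (by linarith)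
  have hle := prodNormInner_le_of_isMaxOn hmax
  by_contra! hlt
  obtain rfl | hn2 : n = 1 ∨ 2 ≤ n := by omega
  · obtain rfl : k = 0 := Subsingleton.elim _ _
    have h := hle (v 0)
    simp only [prodNormInner, Fin.prod_univ_one, inner_self_eq_norm_sq_to_K, hv,
      RCLike.ofReal_one, norm_one, one_pow, mul_one] at h
    change 1 ≤ ‖a‖ at h
    rw [Nat.cast_one, one_mul] at hlt
    nlinarith
  have hpos : 0 < prodNormInner v u := by
    obtain ⟨y, hy⟩ := exists_prodNormInner_pos v fun j => norm_ne_zero_iff.mp (by simp [hv j])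
    exact pos_of_mul_pos_left (hy.trans_le (hle y)) (by positivity)
  have hx : ‖a‖ ^ 2 < 1 := by
    have : (2 : ℝ) ≤ n := by exact_mod_cast hn2
    nlinarith
  have ha : ‖a‖ < 1 := (sq_lt_one_iff₀ (norm_nonneg a)).mp hx
  obtain ⟨w, hw, huw, hvw⟩ :=
    exists_norm_eq_one_inner_eq_zero_inner_eq (mem_sphere_zero_iff_norm.mp hu) (hv k) ha
  set s := √(1 - ‖a‖ ^ 2)
  have hs : 0 < s := Real.sqrt_pos.mpr (sub_pos.mpr hx)
  have hroot : ∏ j, (⟪v j, u⟫_ℂ + -a / s * ⟪v j, w⟫_ℂ) = 0 := by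
    refine Finset.prod_eq_zero (Finset.mem_univ k) ?_
    rw [hvw, div_mul_cancel₀ _ (Complex.ofReal_ne_zero.mpr hs.ne')]
    exact add_neg_cancel a
  have key := one_le_sub_one_mul_norm_sq hn2 hpos
    (norm_prod_inner_add_mul_le (mem_sphere_zero_iff_norm.mp hu) hw huw hle) hroot
  rw [norm_div, norm_neg, Complex.norm_real, Real.norm_of_nonneg hs.le, div_pow,
    Real.sq_sqrt (sub_pos.mpr hx).le, mul_div_assoc', le_div_iff₀ (sub_pos.mpr hx)] at key
  linarith

end InnerProductSpace

end ComplexPlank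

open ComplexPlank in
/-- Equal-weights special case of the complex plank theorem: for unit vectors
`v 0, …, v (n-1)` in `ℂ^d` (`d ≥ 1`) there exists a unit vector `u` with
`|⟨v k, u⟩| ≥ 1/√n` for every `k`. -/
theorem complex_plank_equal_weights (n d : ℕ) (hd : 1 ≤ d)
    (v : Fin n → EuclideanSpace ℂ (Fin d)) (hv : ∀ k, ‖v k‖ = 1) :
    ∃ u : EuclideanSpace ℂ (Fin d), ‖u‖ = 1 ∧
      ∀ k, 1 / Real.sqrt n ≤ ‖(inner ℂ (v k) u : ℂ)‖ := by
  have : Nonempty (Fin d) := ⟨⟨0, hd⟩⟩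
  obtain ⟨u, hu, hmax⟩ := (isCompact_sphere (0 : EuclideanSpace ℂ (Fin d)) 1).exists_isMaxOn
    (NormedSpace.sphere_nonempty.mpr zero_le_one) (continuous_prodNormInner v).continuousOn
  exact ⟨u, mem_sphere_zero_iff_norm.mp hu, one_div_sqrt_le_norm_inner_of_isMaxOn hv hu hmax⟩
end

section
/- Let v_1, …, v_n be unit vectors in ℂ^d with d ≥ 1, and let t_1, …, t_n be positive real numbers satisfying ∑_{k=1}^n t_k^2 = 1. If u is a unit vector maximizing ∏_{k=1}^n |⟨v_k, v⟩|^{t_k^2} over all unit vectors v, then |⟨v_k, u⟩| ≥ t_k for every k = 1, …, n. -/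
/-!
Write `F w = ∏ₖ ‖⟪vₖ, w⟫‖ ^ pₖ` with `pₖ = tₖ²`. Since `∑ pₖ = 1`, `F (c • w) = ‖c‖ * F w`, so a
maximizer `u` satisfies `F w ≤ ‖w‖ * F u` for every `w`, and `F u > 0`.

Fix `j`, write `u = x + c • vⱼ` with `x ⟂ vⱼ` and `a = ‖c‖`, and restrict `F` to the complex line
`z ↦ x + z • vⱼ`: there `F = ‖z‖ ^ pⱼ * Φ z` with `Φ z = ∏_{k ≠ j} ‖αₖ + z βₖ‖ ^ pₖ`. This `Φ`
satisfies the maximum modulus principle (apply the classical one to the holomorphic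
`∏ₖ (αₖ + z βₖ) ^ (⌊N pₖ⌋₊ + 1)`, whose modulus is `Φ ^ N` up to factors independent of `N`, and let
`N → ∞`). Hence for every `r > a` some `z` with `‖z‖ = r` has `Φ z ≥ Φ c`, and comparing with
`F u` gives `r ^ pⱼ ≤ a ^ pⱼ * √(1 - a² + r²)`. Equality holds at `r = a`, so the right derivative
there, `a ^ (pⱼ - 1) * (pⱼ - a²)`, is nonpositive: `tⱼ² ≤ a²`.
-/

open Finset Filter Topology
open scoped InnerProductSpace

namespace Real

lemma min_one_le_rpow {x δ : ℝ} (hx : 0 ≤ x) (hδ₀ : 0 ≤ δ) (hδ₁ : δ ≤ 1) :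
    min 1 x ≤ x ^ δ := by
  rcases le_total x 1 with hx1 | hx1
  · rcases hx.eq_or_lt with rfl | hx0
    · simp [zero_rpow_nonneg]
    · exact (min_le_right _ _).trans (by simpa using rpow_le_rpow_of_exponent_ge hx0 hx1 hδ₁)
  · exact (min_le_left _ _).trans (one_le_rpow hx1 hδ₀)

lemma rpow_le_max_one {x δ : ℝ} (hx : 0 ≤ x) (hδ₀ : 0 ≤ δ) (hδ₁ : δ ≤ 1) :
    x ^ δ ≤ max 1 x := by
  rcases le_total x 1 with hx1 | hx1
  · exact (rpow_le_one hx hx1 hδ₀).trans (le_max_left _ _)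
  · exact (rpow_le_rpow_of_exponent_le hx1 hδ₁).trans_eq (rpow_one x) |>.trans (le_max_right _ _)

lemma pow_floor_add_one_eq {x : ℝ} (hx : 0 < x) (e : ℝ) (N : ℕ) :
    x ^ (⌊N * e⌋₊ + 1) = (x ^ e) ^ N * x ^ ((⌊N * e⌋₊ + 1 : ℕ) - N * e) := by
  rw [← rpow_mul_natCast hx.le, ← rpow_add hx, ← rpow_natCast]
  ring_nf

lemma floor_add_one_sub_mem_Icc {y : ℝ} (hy : 0 ≤ y) :
    ((⌊y⌋₊ + 1 : ℕ) : ℝ) - y ∈ Set.Icc 0 1 := by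
  push_cast
  constructor <;> linarith [Nat.lt_floor_add_one y, Nat.floor_le hy]

lemma rpow_pow_mul_min_one_le_pow {x e : ℝ} (hx : 0 ≤ x) (he : 0 ≤ e) (N : ℕ) :
    (x ^ e) ^ N * min 1 x ≤ x ^ (⌊N * e⌋₊ + 1) := by
  rcases hx.eq_or_lt with rfl | hx0
  · simp
  obtain ⟨hδ₀, hδ₁⟩ := floor_add_one_sub_mem_Icc (mul_nonneg N.cast_nonneg he)
  rw [pow_floor_add_one_eq hx0]
  gcongr
  exact min_one_le_rpow hx hδ₀ hδ₁

lemma pow_le_rpow_pow_mul_max_one {x e : ℝ} (hx : 0 ≤ x) (he : 0 ≤ e) (N : ℕ) :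
    x ^ (⌊N * e⌋₊ + 1) ≤ (x ^ e) ^ N * max 1 x := by
  rcases hx.eq_or_lt with rfl | hx0
  · simp only [ne_eq, Nat.add_one_ne_zero, not_false_eq_true, zero_pow]
    positivity
  obtain ⟨hδ₀, hδ₁⟩ := floor_add_one_sub_mem_Icc (mul_nonneg N.cast_nonneg he)
  rw [pow_floor_add_one_eq hx0]
  gcongr
  exact rpow_le_max_one hx hδ₀ hδ₁

end Real

lemma le_of_forall_pow_mul_le_pow_mul {a b c C : ℝ} (hb : 0 ≤ b) (hc : 0 < c)
    (h : ∀ N : ℕ, a ^ N * c ≤ b ^ N * C) : a ≤ b := by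
  by_contra! hba
  have ha : 0 < a := hb.trans_lt hba
  have hlim : Tendsto (fun N : ℕ => (b / a) ^ N * C) atTop (𝓝 0) := by
    simpa using (tendsto_pow_atTop_nhds_zero_of_lt_one (by positivity)
      ((div_lt_one ha).2 hba)).mul_const C
  refine hc.not_ge (ge_of_tendsto' hlim fun N => ?_)
  rw [div_pow, div_mul_eq_mul_div, le_div_iff₀ (by positivity)]
  linarith [h N]

namespace Complex

variable {ι : Type*} {s : Finset ι} {f : ι → ℂ → ℂ} {e : ι → ℝ} {U : Set ℂ}

lemma prod_norm_rpow_pow_mul_le (hb : Bornology.IsBounded U)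
    (hf : ∀ k ∈ s, DiffContOnCl ℂ (f k) U) (he : ∀ k ∈ s, 0 ≤ e k) {C : ℝ}
    (B : ι → ℝ) (hB : ∀ k ∈ s, ∀ z ∈ frontier U, ‖f k z‖ ≤ B k)
    (hΦ : ∀ z ∈ frontier U, ∏ k ∈ s, ‖f k z‖ ^ e k ≤ C) {z₀ : ℂ} (hz₀ : z₀ ∈ closure U)
    (N : ℕ) :
    (∏ k ∈ s, ‖f k z₀‖ ^ e k) ^ N * ∏ k ∈ s, min 1 ‖f k z₀‖ ≤
      C ^ N * ∏ k ∈ s, max 1 (B k) := by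
  set g : ℂ → ℂ := fun z => ∏ k ∈ s, f k z ^ (⌊N * e k⌋₊ + 1)
  have hg : DiffContOnCl ℂ g U :=
    ⟨DifferentiableOn.fun_finsetProd fun k hk => (hf k hk).differentiableOn.pow _,
      continuousOn_finsetProd _ fun k hk => (hf k hk).continuousOn.pow _⟩
  have hnorm_g (z : ℂ) : ‖g z‖ = ∏ k ∈ s, ‖f k z‖ ^ (⌊N * e k⌋₊ + 1) := by
    simp only [g, norm_prod, norm_pow]
  calc (∏ k ∈ s, ‖f k z₀‖ ^ e k) ^ N * ∏ k ∈ s, min 1 ‖f k z₀‖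
      = ∏ k ∈ s, (‖f k z₀‖ ^ e k) ^ N * min 1 ‖f k z₀‖ := by
        rw [prod_mul_distrib, prod_pow]
    _ ≤ ‖g z₀‖ := by
        rw [hnorm_g]
        exact prod_le_prod (fun k _ => by positivity)
          fun k hk => Real.rpow_pow_mul_min_one_le_pow (norm_nonneg _) (he k hk) N
    _ ≤ C ^ N * ∏ k ∈ s, max 1 (B k) := by
        refine norm_le_of_forall_mem_frontier_norm_le hb hg (fun z hz => ?_) hz₀
        calc ‖g z‖ ≤ ∏ k ∈ s, (‖f k z‖ ^ e k) ^ N * max 1 (B k) := by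
              rw [hnorm_g]
              refine prod_le_prod (fun k _ => by positivity) fun k hk => ?_
              exact (Real.pow_le_rpow_pow_mul_max_one (norm_nonneg _) (he k hk) N).trans
                (by gcongr; exact hB k hk z hz)
          _ = (∏ k ∈ s, ‖f k z‖ ^ e k) ^ N * ∏ k ∈ s, max 1 (B k) := by
              rw [prod_mul_distrib, prod_pow]
          _ ≤ C ^ N * ∏ k ∈ s, max 1 (B k) := by
              gcongr
              exact hΦ z hz

theorem exists_mem_frontier_isMaxOn_prod_norm_rpow
    (hb : Bornology.IsBounded U) (hne : U.Nonempty) (hf : ∀ k ∈ s, DiffContOnCl ℂ (f k) U)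
    (he : ∀ k ∈ s, 0 < e k) :
    ∃ z ∈ frontier U, IsMaxOn (fun z => ∏ k ∈ s, ‖f k z‖ ^ e k) (closure U) z := by
  set Φ : ℂ → ℝ := fun z => ∏ k ∈ s, ‖f k z‖ ^ e k
  have hcompact : IsCompact (frontier U) :=
    hb.isCompact_closure.of_isClosed_subset isClosed_frontier frontier_subset_closure
  have hfrontier : (frontier U).Nonempty :=
    nonempty_frontier_iff.2 ⟨hne, fun h => NormedSpace.unbounded_univ ℂ ℂ (h ▸ hb)⟩
  have hΦ : ContinuousOn Φ (frontier U) :=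
    continuousOn_finsetProd _ fun k hk => ((hf k hk).continuousOn.mono
      frontier_subset_closure).norm.rpow_const fun _ _ => Or.inr (he k hk).le
  obtain ⟨z₂, hz₂, hmax⟩ := hcompact.exists_isMaxOn hfrontier hΦ
  choose! B hB using fun k hk => hcompact.exists_bound_of_continuousOn
    ((hf k hk).continuousOn.mono frontier_subset_closure)
  refine ⟨z₂, hz₂, fun z₀ hz₀ => ?_⟩
  by_cases hzero : ∃ k ∈ s, f k z₀ = 0
  · obtain ⟨k, hk, hk0⟩ := hzero
    have : Φ z₀ = 0 := prod_eq_zero hk (by simp [hk0, (he k hk).ne'])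
    exact this.trans_le (prod_nonneg fun k _ => by positivity)
  push Not at hzero
  refine le_of_forall_pow_mul_le_pow_mul (prod_nonneg fun k _ => by positivity)
    (prod_pos fun k hk => lt_min one_pos (norm_pos_iff.2 (hzero k hk)))
    (prod_norm_rpow_pow_mul_le hb hf (fun k hk => (he k hk).le) B hB (fun z hz => hmax hz) hz₀)

end Complex

theorem IsMaxOn.hasDerivAt_nonpos_of_Ici {f : ℝ → ℝ} {f' a : ℝ} (h : IsMaxOn f (Set.Ici a) a)
    (hf : HasDerivAt f f' a) : f' ≤ 0 := by
  have hseg : segment ℝ a (a + 1) ⊆ Set.Ici a := by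
    rw [segment_eq_Icc (by linarith)]
    exact Set.Icc_subset_Ici_self
  simpa using h.localize.hasFDerivWithinAt_nonpos hf.hasFDerivAt.hasFDerivWithinAt
    (mem_posTangentConeAt_of_segment_subset hseg)

theorem Real.le_sq_of_forall_rpow_le_mul_sqrt {p a : ℝ} (ha : 0 < a)
    (h : ∀ r, a < r → r ^ p ≤ a ^ p * √(1 - a ^ 2 + r ^ 2)) : p ≤ a ^ 2 := by
  set g : ℝ → ℝ := fun r => r ^ p - a ^ p * √(1 - a ^ 2 + r ^ 2)
  have hmax : IsMaxOn g (Set.Ici a) a := by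
    intro r hr
    change g r ≤ g a
    rcases (Set.mem_Ici.1 hr).eq_or_lt with rfl | har
    · exact le_rfl
    · simpa [g] using h r har
  have hderiv : HasDerivAt g (p * a ^ (p - 1) - a ^ p * a) a :=
    ((Real.hasDerivAt_rpow_const (p := p) (Or.inl ha.ne')).sub
      ((((hasDerivAt_pow 2 a).const_add (1 - a ^ 2)).sqrt (by simp)).const_mul (a ^ p))).congr_deriv
      (by simp)
  have := hmax.hasDerivAt_nonpos_of_Ici hderiv
  rw [sub_nonpos, Real.rpow_sub_one ha.ne', mul_div_assoc', div_le_iff₀ ha] at this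
  exact le_of_mul_le_mul_right (by linarith) (Real.rpow_pos_of_pos ha p)

section WeightedProduct

variable {ι E : Type*} [Fintype ι] [NormedAddCommGroup E] [InnerProductSpace ℂ E]
  {v : ι → E} {p : ι → ℝ}

noncomputable def weightedProd (v : ι → E) (p : ι → ℝ) (w : E) : ℝ := ∏ k, ‖⟪v k, w⟫_ℂ‖ ^ p k

lemma weightedProd_smul (hp : ∑ k, p k = 1) (hp0 : ∀ k, 0 ≤ p k) (c : ℂ) (w : E) :
    weightedProd v p (c • w) = ‖c‖ * weightedProd v p w := by
  simp only [weightedProd, inner_smul_right, norm_mul,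
    Real.mul_rpow (norm_nonneg _) (norm_nonneg _), prod_mul_distrib,
    ← Real.rpow_sum_of_nonneg (norm_nonneg c) fun k _ => hp0 k, hp, Real.rpow_one]

lemma weightedProd_le_norm_mul (hp : ∑ k, p k = 1) (hp0 : ∀ k, 0 ≤ p k) {u : E}
    (hmax : IsMaxOn (weightedProd v p) (Metric.sphere 0 1) u) (w : E) :
    weightedProd v p w ≤ ‖w‖ * weightedProd v p u := by
  rcases eq_or_ne w 0 with rfl | hw
  · rw [← zero_smul ℂ (0 : E), weightedProd_smul hp hp0]
    simp
  have hunit : ((‖w‖⁻¹ : ℂ) • w) ∈ Metric.sphere (0 : E) 1 := by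
    simpa using norm_smul_inv_norm (𝕜 := ℂ) hw
  calc weightedProd v p w = ‖w‖ * weightedProd v p ((‖w‖⁻¹ : ℂ) • w) := by
        rw [weightedProd_smul hp hp0, norm_inv, Complex.norm_real, norm_norm,
          mul_inv_cancel_left₀ (norm_ne_zero_iff.2 hw)]
    _ ≤ ‖w‖ * weightedProd v p u := by gcongr; exact hmax hunit

lemma weightedProd_pos_of_isMaxOn (hp : ∑ k, p k = 1) (hp0 : ∀ k, 0 ≤ p k) {u : E}
    (hmax : IsMaxOn (weightedProd v p) (Metric.sphere 0 1) u) (hv : ∀ k, v k ≠ 0) :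
    0 < weightedProd v p u := by
  obtain ⟨x, hx⟩ := Module.Dual.exists_forall_ne_zero_of_forall_exists
    (fun k => (innerSL ℂ (v k) : E →ₗ[ℂ] ℂ)) fun k => ⟨v k, by simpa using hv k⟩
  have hpos : 0 < weightedProd v p x :=
    prod_pos fun k _ => Real.rpow_pos_of_pos (norm_pos_iff.2 (by simpa using hx k)) _
  exact pos_of_mul_pos_right (hpos.trans_le (weightedProd_le_norm_mul hp hp0 hmax x))
    (norm_nonneg _)

lemma rpow_le_norm_inner_rpow_mul_sqrt_of_isMaxOn (hp : ∑ k, p k = 1) (hp0 : ∀ k, 0 < p k) {u : E}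
    (hu : ‖u‖ = 1) (hmax : IsMaxOn (weightedProd v p) (Metric.sphere 0 1) u)
    (hpos : 0 < weightedProd v p u) {j : ι} (hj : ‖v j‖ = 1) {r : ℝ} (hr : ‖⟪v j, u⟫_ℂ‖ < r) :
    r ^ p j ≤ ‖⟪v j, u⟫_ℂ‖ ^ p j * √(1 - ‖⟪v j, u⟫_ℂ‖ ^ 2 + r ^ 2) := by
  classical
  set c := ⟪v j, u⟫_ℂ
  set x := u - c • v j
  have hvj : ⟪v j, v j⟫_ℂ = 1 := by simp [inner_self_eq_norm_sq_to_K, hj]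
  have hx : ⟪v j, x⟫_ℂ = 0 := by
    simp only [x, c, inner_sub_right, inner_smul_right, hvj, mul_one, sub_self]
  have hxu : x + c • v j = u := sub_add_cancel u _
  have hnorm (z : ℂ) : ‖x + z • v j‖ ^ 2 = ‖x‖ ^ 2 + ‖z‖ ^ 2 := by
    rw [@norm_add_sq ℂ, inner_smul_right, inner_eq_zero_symm.1 hx, norm_smul, hj]
    simp
  have hx_norm : ‖x‖ ^ 2 = 1 - ‖c‖ ^ 2 := by
    have := hnorm c
    rw [hxu, hu] at this
    linarith
  set f : ι → ℂ → ℂ := fun k z => ⟪v k, x⟫_ℂ + z * ⟪v k, v j⟫_ℂ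
  set Φ : ℂ → ℝ := fun z => ∏ k ∈ univ.erase j, ‖f k z‖ ^ p k
  have hsplit (z : ℂ) : weightedProd v p (x + z • v j) = ‖z‖ ^ p j * Φ z := by
    rw [weightedProd, ← mul_prod_erase univ _ (mem_univ j)]
    simp only [f, Φ, inner_add_right, inner_smul_right, hx, hvj, zero_add, mul_one]
  have hr0 : 0 < r := (norm_nonneg _).trans_lt hr
  obtain ⟨z, hz, hΦmax⟩ := Complex.exists_mem_frontier_isMaxOn_prod_norm_rpow
    (s := univ.erase j) (e := p) Metric.isBounded_ball ⟨0, Metric.mem_ball_self hr0⟩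
    (fun k _ => (by fun_prop : Differentiable ℂ (f k)).diffContOnCl) (fun k _ => hp0 k)
  rw [frontier_ball 0 hr0.ne', mem_sphere_zero_iff_norm] at hz
  have hΦ : Φ c ≤ Φ z :=
    hΦmax (by rw [closure_ball 0 hr0.ne']; exact mem_closedBall_zero_iff.2 hr.le)
  have hu_split : weightedProd v p u = ‖c‖ ^ p j * Φ c := by rw [← hsplit, hxu]
  have hΦc : 0 < Φ c := pos_of_mul_pos_right (hu_split ▸ hpos) (by positivity)
  refine le_of_mul_le_mul_right ?_ hΦc
  calc r ^ p j * Φ c ≤ r ^ p j * Φ z := by gcongr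
    _ = weightedProd v p (x + z • v j) := by rw [hsplit, hz]
    _ ≤ ‖x + z • v j‖ * weightedProd v p u :=
        weightedProd_le_norm_mul hp (fun k => (hp0 k).le) hmax _
    _ = ‖c‖ ^ p j * √(1 - ‖c‖ ^ 2 + r ^ 2) * Φ c := by
        rw [hu_split, ← Real.sqrt_sq (norm_nonneg (x + z • v j)), hnorm, hx_norm, hz]
        ring

end WeightedProduct

theorem weighted_maximizer_ge_general (n d : ℕ)
    (v : Fin n → EuclideanSpace ℂ (Fin d)) (hv : ∀ k, ‖v k‖ = 1)
    (t : Fin n → ℝ) (ht : ∀ k, 0 < t k) (htsum : ∑ k, t k ^ 2 = 1)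
    (u : EuclideanSpace ℂ (Fin d)) (hu : ‖u‖ = 1)
    (hmax : ∀ w : EuclideanSpace ℂ (Fin d), ‖w‖ = 1 →
      ∏ k, ‖(inner ℂ (v k) w : ℂ)‖ ^ (t k ^ 2 : ℝ) ≤
        ∏ k, ‖(inner ℂ (v k) u : ℂ)‖ ^ (t k ^ 2 : ℝ)) :
    ∀ k, t k ≤ ‖(inner ℂ (v k) u : ℂ)‖ := by
  intro j
  have hp (k : Fin n) : 0 < t k ^ 2 := pow_pos (ht k) 2
  have hmax' : IsMaxOn (weightedProd v fun k => t k ^ 2) (Metric.sphere 0 1) u :=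
    fun w hw => hmax w (mem_sphere_zero_iff_norm.1 hw)
  have hpos := weightedProd_pos_of_isMaxOn htsum (fun k => (hp k).le) hmax'
    fun k => norm_ne_zero_iff.1 (by simp [hv k])
  have ha : 0 < ‖⟪v j, u⟫_ℂ‖ := norm_pos_iff.2 fun h0 =>
    hpos.ne' (prod_eq_zero (mem_univ j) (by simp [h0, (hp j).ne']))
  have hsq : t j ^ 2 ≤ ‖⟪v j, u⟫_ℂ‖ ^ 2 := Real.le_sq_of_forall_rpow_le_mul_sqrt ha
    fun r hr => rpow_le_norm_inner_rpow_mul_sqrt_of_isMaxOn htsum hp hu hmax' hpos (hv j) hr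
  exact (pow_le_pow_iff_left₀ (ht j).le (norm_nonneg _) two_ne_zero).1 hsq

/-- Weighted maximizer theorem: if `u` maximizes `∏ k, |⟨v k, v⟩| ^ (t k ^ 2)` over unit
vectors `v`, where the `t k` are positive with `∑ k, t k ^ 2 = 1`, then
`|⟨v k, u⟩| ≥ t k` for every `k`. -/
theorem weighted_maximizer_ge (n d : ℕ) (hd : 1 ≤ d)
    (v : Fin n → EuclideanSpace ℂ (Fin d)) (hv : ∀ k, ‖v k‖ = 1)
    (t : Fin n → ℝ) (ht : ∀ k, 0 < t k) (htsum : ∑ k, t k ^ 2 = 1)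
    (u : EuclideanSpace ℂ (Fin d)) (hu : ‖u‖ = 1)
    (hmax : ∀ w : EuclideanSpace ℂ (Fin d), ‖w‖ = 1 →
      ∏ k, ‖(inner ℂ (v k) w : ℂ)‖ ^ (t k ^ 2 : ℝ) ≤
        ∏ k, ‖(inner ℂ (v k) u : ℂ)‖ ^ (t k ^ 2 : ℝ)) :
    ∀ k, t k ≤ ‖(inner ℂ (v k) u : ℂ)‖ :=
  weighted_maximizer_ge_general n d v hv t ht htsum u hu hmax
end

section
/- Let v_1, …, v_n be unit vectors in ℂ^d with d ≥ 1 and let u be a unit vector with ⟨v_k, u⟩ ≠ 0 for every k that satisfies the fixed-point identity u = (1/n) ∑_{k=1}^n (1/⟨v_k, u⟩) · v_k. Then, writing ⟨u, v_k⟩ for the conjugate of ⟨v_k, u⟩, ∑_{k=2}^n ⟨v_1, v_k⟩/⟨u, v_k⟩ = ⟨v_1, u⟩·(n − 1/|⟨v_1, u⟩|²). -/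
/-- Derivative computation: for unit vectors `v 0, …, v n` in `ℂ^d` and a unit vector `u`
with `⟨v k, u⟩ ≠ 0` satisfying the fixed-point identity
`u = (1/(n+1)) ∑ k, (1/⟨v k, u⟩) • v k`, one has
`∑_{k ≠ 0} ⟨v 0, v k⟩ / ⟨u, v k⟩ = ⟨v 0, u⟩ ((n+1) - 1/|⟨v 0, u⟩|²)`. -/
theorem derivative_computation (n d : ℕ) (hd : 1 ≤ d)
    (v : Fin (n + 1) → EuclideanSpace ℂ (Fin d)) (hv : ∀ k, ‖v k‖ = 1)
    (u : EuclideanSpace ℂ (Fin d)) (hu : ‖u‖ = 1)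
    (hne : ∀ k, (inner ℂ (v k) u : ℂ) ≠ 0)
    (hfix : u = ((n + 1 : ℂ))⁻¹ • ∑ k, ((inner ℂ (v k) u : ℂ))⁻¹ • v k) :
    ∑ k ∈ Finset.univ.erase (0 : Fin (n + 1)),
        (inner ℂ (v 0) (v k) : ℂ) / (inner ℂ u (v k) : ℂ) =
      (inner ℂ (v 0) u : ℂ) *
        ((n + 1 : ℂ) - 1 / ((‖(inner ℂ (v 0) u : ℂ)‖ : ℂ)) ^ 2) := by
  set a : Fin (n + 1) → ℂ := fun k => (inner ℂ (v k) u : ℂ) with ha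
  have hak : ∀ k, (inner ℂ (v k) u : ℂ) = a k := fun _ => rfl
  have ha0 : (inner ℂ (v 0) u : ℂ) = a 0 := rfl
  have hane : ∀ k, a k ≠ 0 := fun k => hne k
  have hnn : ((n : ℂ) + 1) ≠ 0 := by
    have : ((n + 1 : ℕ) : ℂ) ≠ 0 := Nat.cast_ne_zero.mpr n.succ_ne_zero
    simpa using this
  -- general inner-product identity from the fixed point
  have h1 : ∀ x : EuclideanSpace ℂ (Fin d),
      (inner ℂ x u : ℂ) = ((n : ℂ) + 1)⁻¹ * ∑ k, (a k)⁻¹ * (inner ℂ x (v k) : ℂ) := by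
    intro x
    conv_lhs => rw [hfix]
    rw [inner_smul_right, inner_sum]
    simp only [inner_smul_right]
    rfl
  -- with x = u : ∑ conj(a k)/(a k) = n+1
  have h2 : ∑ k, (starRingEnd ℂ) (a k) / a k = (n : ℂ) + 1 := by
    have h := h1 u
    rw [inner_self_eq_norm_sq_to_K, hu] at h
    simp only [Complex.ofReal_one, one_pow, RCLike.ofReal_one] at h
    have h2' : ∑ k, (a k)⁻¹ * (inner ℂ u (v k) : ℂ) = (n : ℂ) + 1 := by
      have := (inv_mul_eq_iff_eq_mul₀ hnn).mp h.symm
      rw [this, mul_one]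
    calc ∑ k, (starRingEnd ℂ) (a k) / a k
        = ∑ k, (a k)⁻¹ * (inner ℂ u (v k) : ℂ) := by
          refine Finset.sum_congr rfl fun k _ => ?_
          rw [← inner_conj_symm u (v k), hak k]
          ring
      _ = (n : ℂ) + 1 := h2'
  -- each term has modulus one, so all terms equal 1, hence a k is real
  have habs : ∀ k, ‖(starRingEnd ℂ) (a k) / a k‖ = 1 := by
    intro k
    rw [norm_div, Complex.norm_conj, div_self]
    exact norm_ne_zero_iff.mpr (hane k)
  have hsum_re : ∑ k, ((starRingEnd ℂ) (a k) / a k).re = (n : ℝ) + 1 := by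
    have := congrArg Complex.re h2
    rw [Complex.re_sum] at this
    simpa using this
  have hre1 : ∀ k, ((starRingEnd ℂ) (a k) / a k).re = 1 := by
    by_contra hcon
    push_neg at hcon
    obtain ⟨j, hj⟩ := hcon
    have hle : ∀ k, ((starRingEnd ℂ) (a k) / a k).re ≤ 1 := fun k =>
      (Complex.re_le_norm _).trans (le_of_eq (habs k))
    have hjlt : ((starRingEnd ℂ) (a j) / a j).re < 1 := lt_of_le_of_ne (hle j) hj
    have hsum : (∑ k, ((starRingEnd ℂ) (a k) / a k).re) < ∑ _k : Fin (n + 1), (1 : ℝ) :=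
      Finset.sum_lt_sum (fun k _ => hle k) ⟨j, Finset.mem_univ j, hjlt⟩
    rw [hsum_re] at hsum
    simp at hsum
  have hreal : ∀ k, (starRingEnd ℂ) (a k) = a k := by
    intro k
    have hone : (starRingEnd ℂ) (a k) / a k = 1 := by
      have him : ((starRingEnd ℂ) (a k) / a k).im = 0 := by
        have hsq := Complex.sq_norm ((starRingEnd ℂ) (a k) / a k)
        rw [habs k, Complex.normSq_apply, hre1 k] at hsq
        nlinarith [sq_nonneg ((starRingEnd ℂ) (a k) / a k).im]
      exact Complex.ext (by simpa using hre1 k) (by simpa using him)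
    rw [div_eq_one_iff_eq (hane k)] at hone
    exact hone
  have hinneru : ∀ k, (inner ℂ u (v k) : ℂ) = a k := by
    intro k
    rw [← inner_conj_symm u (v k), hak k]
    exact hreal k
  -- with x = v 0 : full sum identity
  have h3 : ∑ k, (inner ℂ (v 0) (v k) : ℂ) / a k = ((n : ℂ) + 1) * a 0 := by
    have h := h1 (v 0)
    rw [ha0] at h
    calc ∑ k, (inner ℂ (v 0) (v k) : ℂ) / a k
        = ∑ k, (a k)⁻¹ * (inner ℂ (v 0) (v k) : ℂ) :=
          Finset.sum_congr rfl fun k _ => div_eq_inv_mul _ _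
      _ = ((n : ℂ) + 1) * a 0 := by
          rw [h, ← mul_assoc, mul_inv_cancel₀ hnn, one_mul]
  have hv00 : (inner ℂ (v 0) (v 0) : ℂ) = 1 := by
    rw [inner_self_eq_norm_sq_to_K, hv 0]; norm_num
  have hsplit : ∑ k ∈ Finset.univ.erase (0 : Fin (n + 1)),
      (inner ℂ (v 0) (v k) : ℂ) / a k = ((n : ℂ) + 1) * a 0 - 1 / a 0 := by
    have h := Finset.add_sum_erase Finset.univ
      (fun k => (inner ℂ (v 0) (v k) : ℂ) / a k) (Finset.mem_univ (0 : Fin (n + 1)))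
    beta_reduce at h
    rw [h3, hv00] at h
    linear_combination h
  have hlhs : ∑ k ∈ Finset.univ.erase (0 : Fin (n + 1)),
      (inner ℂ (v 0) (v k) : ℂ) / (inner ℂ u (v k) : ℂ)
      = ((n : ℂ) + 1) * a 0 - 1 / a 0 := by
    rw [← hsplit]
    exact Finset.sum_congr rfl fun k _ => by rw [hinneru k]
  have hnorm : ((‖(inner ℂ (v 0) u : ℂ)‖ : ℂ)) ^ 2 = a 0 * a 0 := by
    rw [ha0, ← Complex.mul_conj' (a 0), hreal 0]
  rw [hlhs, hnorm, ha0]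
  have h0 : a 0 ≠ 0 := hane 0
  field_simp
end

section
/- Let v_1, …, v_n be unit vectors in ℂ^d with d ≥ 1, let u be a unit vector with ⟨v_k, u⟩ ≠ 0 for every k satisfying u = (1/n) ∑_{k=1}^n (1/⟨v_k, u⟩) · v_k, and suppose |⟨v_1, u⟩| < 1/√n. Then there exists a complex number z with |z + ⟨u, v_1⟩| = |⟨v_1, u⟩| such that ∏_{k=2}^n |⟨v_k, z·v_1 + u⟩| > ∏_{k=2}^n |⟨v_k, u⟩|. -/
/-!
Pairing the fixed-point identity with `u` gives `∑ₖ conj ⟪v k, u⟫ / ⟪v k, u⟫ = n + 1`, a sum of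
`n + 1` unit complex numbers, so every `⟪v k, u⟫` is real. Pairing it with `v 0` then computes the
logarithmic derivative at `0` of the polynomial `f z = ∏_{k ≠ 0} ⟪v k, z • v 0 + u⟫` as
`(n + 1) b - b⁻¹`, where `b = ⟪u, v 0⟫` is real. So `‖f‖²` strictly increases from `0` towards the
centre `-b` of the circle `‖z + b‖ = ‖b‖`, at a rate proportional to `1 - (n + 1) b² > 0`, and by
the maximum modulus principle `‖f‖` exceeds `‖f 0‖` somewhere on that circle.
-/

open Complex Filter Metric Topology
open scoped ComplexConjugate ComplexOrder InnerProductSpace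

lemma Complex.eq_one_of_sum_eq_card {ι : Type*} {s : Finset ι} {t : ι → ℂ}
    (hle : ∀ k ∈ s, ‖t k‖ ≤ 1) (hsum : ∑ k ∈ s, t k = s.card) : ∀ k ∈ s, t k = 1 := by
  have hre_le : ∀ k ∈ s, (t k).re ≤ 1 := fun k hk => (re_le_norm _).trans (hle k hk)
  have hre : ∀ k ∈ s, (t k).re = 1 := by
    refine (Finset.sum_eq_sum_iff_of_le hre_le).mp ?_
    simpa [re_sum] using congrArg re hsum
  intro k hk
  have hnonneg : 0 ≤ t k :=
    re_eq_norm.mp (le_antisymm (re_le_norm _) (hre k hk ▸ hle k hk))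
  exact ext (hre k hk) (nonneg_iff.mp hnonneg).2.symm

lemma mul_sq_lt_one_of_lt_one_div_sqrt {x N : ℝ} (hx : 0 ≤ x) (hN : 0 < N) (h : x < 1 / √N) :
    N * x ^ 2 < 1 := by
  have h2 := pow_lt_pow_left₀ h hx two_ne_zero
  rwa [div_pow, Real.sq_sqrt hN.le, one_pow, lt_div_iff₀' hN] at h2

lemma HasDerivAt.eventually_nhdsGT_lt {g : ℝ → ℝ} {g' x : ℝ} (hg : HasDerivAt g g' x)
    (hpos : 0 < g') : ∀ᶠ t in 𝓝[>] x, g x < g t := by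
  filter_upwards [((hasDerivAt_iff_tendsto_slope.mp hg).mono_left (nhdsGT_le_nhdsNE x)).eventually
    (eventually_gt_nhds hpos), self_mem_nhdsWithin] with t hslope ht
  simpa using pos_of_slope_pos (f := fun y => g y - g x) ht (by simpa [slope_def_field] using hslope)
    (sub_self _)

lemma hasDerivAt_prod_add_mul {𝕜 ι : Type*} [NontriviallyNormedField 𝕜] (s : Finset ι)
    {a b : ι → 𝕜} (ha : ∀ k ∈ s, a k ≠ 0) :
    HasDerivAt (fun z => ∏ k ∈ s, (a k + z * b k)) ((∏ k ∈ s, a k) * ∑ k ∈ s, b k / a k) 0 := by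
  classical
  have hfactor (k : ι) : HasDerivAt (fun z => a k + z * b k) (b k) 0 := by
    simpa using ((hasDerivAt_id (0 : 𝕜)).mul_const (b k)).const_add (a k)
  refine (HasDerivAt.fun_finsetProd fun k _ => hfactor k).congr_deriv ?_
  rw [Finset.mul_sum]
  refine Finset.sum_congr rfl fun k hk => ?_
  rw [← Finset.mul_prod_erase s a hk]
  simp only [zero_mul, add_zero, smul_eq_mul]
  field_simp [ha k hk]

lemma exists_mem_sphere_lt_norm_of_mem_ball {E F : Type*} [NormedAddCommGroup E]
    [NormedSpace ℂ E] [Nontrivial E] [NormedAddCommGroup F] [NormedSpace ℂ F] {f : E → F}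
    (hf : Differentiable ℂ f) {c w : E} {r M : ℝ} (hw : w ∈ ball c r) (hM : M < ‖f w‖) :
    ∃ z ∈ sphere c r, M < ‖f z‖ := by
  by_contra! hsphere
  have hr : r ≠ 0 := (pos_of_mem_ball hw).ne'
  refine hM.not_ge (Complex.norm_le_of_forall_mem_frontier_norm_le isBounded_ball
    hf.diffContOnCl ?_ (subset_closure hw))
  rwa [frontier_ball c hr]

lemma exists_mem_sphere_norm_lt_of_re_logDeriv_pos {f : ℂ → ℂ} {L c z₀ : ℂ}
    (hf : Differentiable ℂ f) (hf' : HasDerivAt f (f z₀ * L) z₀) (hf0 : f z₀ ≠ 0)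
    (hL : 0 < (L * (c - z₀)).re) : ∃ z ∈ sphere c ‖z₀ - c‖, ‖f z₀‖ < ‖f z‖ := by
  set path : ℝ → ℂ := fun t => z₀ + t * (c - z₀)
  have hpath : HasDerivAt (fun t => f (path t)) (f z₀ * L * (c - z₀)) 0 := by
    refine HasDerivAt.comp_ofReal (e := fun w => f (z₀ + w * (c - z₀))) ?_
    have := ((hasDerivAt_id ((0 : ℝ) : ℂ)).mul_const (c - z₀)).const_add z₀
    exact hf'.comp_of_eq _ (by simpa using this) (by simp)
  have hsq : ∀ᶠ t in 𝓝[>] 0, ‖f z₀‖ ^ 2 < ‖f (path t)‖ ^ 2 := by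
    refine (hpath.norm_sq.eventually_nhdsGT_lt ?_).mono fun t ht => by simpa [path] using ht
    have hprod : f z₀ * L * (c - z₀) * conj (f z₀) = (‖f z₀‖ ^ 2 : ℝ) * (L * (c - z₀)) := by
      push_cast
      rw [← mul_conj']
      ring
    simp only [path, ofReal_zero, zero_mul, add_zero]
    rw [Complex.inner, hprod, re_ofReal_mul]
    positivity
  obtain ⟨t, hlt, ht0, ht1⟩ :=
    (hsq.and (Ioo_mem_nhdsGT (zero_lt_one' ℝ))).exists
  have hr : 0 < ‖z₀ - c‖ := by
    refine norm_pos_iff.mpr (sub_ne_zero.mpr fun h => ?_)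
    simp [h] at hL
  refine exists_mem_sphere_lt_norm_of_mem_ball hf ?_ (pow_lt_pow_iff_left₀ (norm_nonneg _)
    (norm_nonneg _) two_ne_zero |>.mp hlt)
  have hdist : path t - c = (1 - t : ℝ) * (z₀ - c) := by push_cast [path]; ring
  rw [mem_ball, dist_eq_norm, hdist, norm_mul, Complex.norm_real, Real.norm_of_nonneg (by linarith)]
  nlinarith

section FixedPoint

variable {E ι : Type*} [NormedAddCommGroup E] [InnerProductSpace ℂ E] [Fintype ι]
  {v : ι → E} {u : E}

lemma inner_comm_of_eq_inv_card_smul_sum (hu : ‖u‖ = 1) (hne : ∀ k, ⟪v k, u⟫_ℂ ≠ 0)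
    (hfix : u = (Fintype.card ι : ℂ)⁻¹ • ∑ k, (⟪v k, u⟫_ℂ)⁻¹ • v k) (k : ι) :
    ⟪u, v k⟫_ℂ = ⟪v k, u⟫_ℂ := by
  have h := congrArg (⟪u, ·⟫_ℂ) hfix
  simp only [inner_smul_right, inner_sum, inner_self_eq_norm_sq_to_K, hu] at h
  have hcard : (Fintype.card ι : ℂ) ≠ 0 := fun h0 => by simp [h0] at h
  have hsum : ∑ k, (⟪v k, u⟫_ℂ)⁻¹ * ⟪u, v k⟫_ℂ = (Finset.univ : Finset ι).card := by
    rw [Finset.card_univ]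
    exact ((inv_mul_eq_one₀ hcard).mp (by simpa using h.symm)).symm
  have hnorm : ∀ k ∈ Finset.univ, ‖(⟪v k, u⟫_ℂ)⁻¹ * ⟪u, v k⟫_ℂ‖ ≤ 1 := fun k _ => by
    rw [norm_mul, norm_inv, norm_inner_symm u, inv_mul_cancel₀ (norm_ne_zero_iff.mpr (hne k))]
  have := Complex.eq_one_of_sum_eq_card hnorm hsum k (Finset.mem_univ k)
  rwa [inv_mul_eq_one₀ (hne k), eq_comm] at this

lemma inner_eq_inv_card_mul_sum (hreal : ∀ k, ⟪u, v k⟫_ℂ = ⟪v k, u⟫_ℂ)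
    (hfix : u = (Fintype.card ι : ℂ)⁻¹ • ∑ k, (⟪v k, u⟫_ℂ)⁻¹ • v k) (w : E) :
    ⟪u, w⟫_ℂ = (Fintype.card ι : ℂ)⁻¹ * ∑ k, ⟪v k, w⟫_ℂ / ⟪v k, u⟫_ℂ := by
  have h := congrArg (⟪·, w⟫_ℂ) hfix
  simp only [inner_smul_left, sum_inner, map_inv₀, map_natCast] at h
  rw [h]
  simp only [inner_conj_symm, hreal, div_eq_inv_mul]

lemma sum_erase_inner_div_inner_eq [DecidableEq ι] (hreal : ∀ k, ⟪u, v k⟫_ℂ = ⟪v k, u⟫_ℂ)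
    (hfix : u = (Fintype.card ι : ℂ)⁻¹ • ∑ k, (⟪v k, u⟫_ℂ)⁻¹ • v k) {i : ι} (hvi : ‖v i‖ = 1) :
    ∑ k ∈ Finset.univ.erase i, ⟪v k, v i⟫_ℂ / ⟪v k, u⟫_ℂ
      = Fintype.card ι * ⟪u, v i⟫_ℂ - (⟪u, v i⟫_ℂ)⁻¹ := by
  have hcard : (Fintype.card ι : ℂ) ≠ 0 := Nat.cast_ne_zero.mpr (Fintype.card_pos_iff.mpr ⟨i⟩).ne'
  have h := inner_eq_inv_card_mul_sum hreal hfix (v i)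
  rw [← Finset.sum_erase_add _ _ (Finset.mem_univ i), inner_self_eq_norm_sq_to_K, hvi,
    ← hreal i, eq_inv_mul_iff_mul_eq₀ hcard] at h
  rw [h]
  push_cast
  ring

end FixedPoint

theorem key_step_general (n d : ℕ)
    (v : Fin (n + 1) → EuclideanSpace ℂ (Fin d)) (hv : ∀ k, ‖v k‖ = 1)
    (u : EuclideanSpace ℂ (Fin d)) (hu : ‖u‖ = 1)
    (hne : ∀ k, (inner ℂ (v k) u : ℂ) ≠ 0)
    (hfix : u = ((n + 1 : ℂ))⁻¹ • ∑ k, ((inner ℂ (v k) u : ℂ))⁻¹ • v k)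
    (hsmall : ‖(inner ℂ (v 0) u : ℂ)‖ < 1 / Real.sqrt (n + 1)) :
    ∃ z : ℂ, ‖z + (inner ℂ u (v 0) : ℂ)‖ = ‖(inner ℂ (v 0) u : ℂ)‖ ∧
      ∏ k ∈ Finset.univ.erase (0 : Fin (n + 1)), ‖(inner ℂ (v k) u : ℂ)‖ <
        ∏ k ∈ Finset.univ.erase (0 : Fin (n + 1)),
          ‖(inner ℂ (v k) (z • v 0 + u) : ℂ)‖ := by
  have hfix' : u = (Fintype.card (Fin (n + 1)) : ℂ)⁻¹ • ∑ k, (⟪v k, u⟫_ℂ)⁻¹ • v k := by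
    rwa [Fintype.card_fin, Nat.cast_succ]
  have hreal := inner_comm_of_eq_inv_card_smul_sum hu hne hfix'
  have hlog := sum_erase_inner_div_inner_eq hreal hfix' (hv 0)
  have hsmall' : (n + 1) * ‖⟪u, v 0⟫_ℂ‖ ^ 2 < 1 := by
    rw [norm_inner_symm]
    exact mul_sq_lt_one_of_lt_one_div_sqrt (norm_nonneg _) (by positivity) hsmall
  have hconj : conj ⟪u, v 0⟫_ℂ = ⟪u, v 0⟫_ℂ := by rw [inner_conj_symm, hreal]
  rw [Fintype.card_fin, Nat.cast_succ] at hlog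
  set s := Finset.univ.erase (0 : Fin (n + 1))
  set b := ⟪u, v 0⟫_ℂ
  set f : ℂ → ℂ := fun z => ∏ k ∈ s, (⟪v k, u⟫_ℂ + z * ⟪v k, v 0⟫_ℂ)
  have hf (z : ℂ) : ∏ k ∈ s, ‖⟪v k, z • v 0 + u⟫_ℂ‖ = ‖f z‖ := by
    simp only [f, norm_prod, inner_add_right, inner_smul_right, add_comm]
  have hf_zero : f 0 = ∏ k ∈ s, ⟪v k, u⟫_ℂ := by simp [f]
  have hderiv : HasDerivAt f (f 0 * ((n + 1) * b - b⁻¹)) 0 := by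
    rw [← hlog, hf_zero]
    exact hasDerivAt_prod_add_mul s (a := (⟪v ·, u⟫_ℂ)) (b := (⟪v ·, v 0⟫_ℂ)) fun k _ => hne k
  have hpos : 0 < (((n + 1) * b - b⁻¹) * (-b - 0)).re := by
    have hb : b ≠ 0 := (hreal 0).trans_ne (hne 0)
    have hexpand : ((n + 1) * b - b⁻¹) * (-b - 0) = ((1 - (n + 1) * ‖b‖ ^ 2 : ℝ) : ℂ) := by
      push_cast
      rw [← mul_conj', hconj]
      field_simp
      ring
    rw [hexpand, ofReal_re]
    linarith
  obtain ⟨z, hz, hlt⟩ :=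
    exists_mem_sphere_norm_lt_of_re_logDeriv_pos (c := -b) (by fun_prop) hderiv
      (hf_zero ▸ Finset.prod_ne_zero_iff.mpr fun k _ => hne k) hpos
  refine ⟨z, ?_, ?_⟩
  · rw [← hreal 0]
    simpa only [mem_sphere, dist_eq_norm, sub_neg_eq_add, zero_add] using hz
  · simpa only [← hf, zero_smul, zero_add] using hlt

/-- Key step of the proof: if a unit vector `u` with all `⟨v k, u⟩ ≠ 0` satisfies the
fixed-point identity and `|⟨v 0, u⟩| < 1/√(n+1)`, then there is a point `z` on the circle
(`|z + ⟨u, v 0⟩| = |⟨v 0, u⟩|`, so that `z • v 0 + u` is a unit vector) where the product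
`∏_{k ≠ 0} |⟨v k, z • v 0 + u⟩|` strictly exceeds `∏_{k ≠ 0} |⟨v k, u⟩|`. -/
theorem key_step (n d : ℕ) (hd : 1 ≤ d)
    (v : Fin (n + 1) → EuclideanSpace ℂ (Fin d)) (hv : ∀ k, ‖v k‖ = 1)
    (u : EuclideanSpace ℂ (Fin d)) (hu : ‖u‖ = 1)
    (hne : ∀ k, (inner ℂ (v k) u : ℂ) ≠ 0)
    (hfix : u = ((n + 1 : ℂ))⁻¹ • ∑ k, ((inner ℂ (v k) u : ℂ))⁻¹ • v k)
    (hsmall : ‖(inner ℂ (v 0) u : ℂ)‖ < 1 / Real.sqrt (n + 1)) :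
    ∃ z : ℂ, ‖z + (inner ℂ u (v 0) : ℂ)‖ = ‖(inner ℂ (v 0) u : ℂ)‖ ∧
      ∏ k ∈ Finset.univ.erase (0 : Fin (n + 1)), ‖(inner ℂ (v k) u : ℂ)‖ <
        ∏ k ∈ Finset.univ.erase (0 : Fin (n + 1)),
          ‖(inner ℂ (v k) (z • v 0 + u) : ℂ)‖ :=
  key_step_general n d v hv u hu hne hfix hsmall
end

section
/- Let p : ℂ → ℂ be a polynomial with p(0) = 1, let w be a nonzero complex number, let C be the circle in ℂ of radius |w| centered at −conj(w) (so 0 ∈ C), and suppose p'(0) = w·c for some real number c < 0. Then there exists a point z on the circle C with |p(z)| > 1. -/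
open Topology Filter

/-- Abstract one-variable statement: let `p` be a complex polynomial with `p 0 = 1`, let
`w ≠ 0`, and suppose `p'(0) = w * c` for some real `c < 0`. Then on the circle of radius
`|w|` centered at `-conj w` (which passes through `0`) there is a point `z` with
`|p z| > 1`. -/
theorem max_modulus_on_circle (p : Polynomial ℂ) (hp0 : p.eval 0 = 1)
    (w : ℂ) (hw : w ≠ 0) (c : ℝ) (hc : c < 0)
    (hp' : (Polynomial.derivative p).eval 0 = w * (c : ℂ)) :
    ∃ z : ℂ, ‖z + (starRingEnd ℂ) w‖ = ‖w‖ ∧ 1 < ‖p.eval z‖ := by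
  by_contra h
  push_neg at h
  set cw := (starRingEnd ℂ) w with hcw
  -- the curve t ↦ -t * conj w, moving into the disc
  set f : ℝ → ℝ := fun t => (p.eval (-(t : ℂ) * cw)).re with hf
  -- derivative computation
  have h1 : HasDerivAt (fun t : ℝ => -(t : ℂ) * cw) (-cw) 0 := by
    simpa using (Complex.ofRealCLM.hasDerivAt.neg.mul_const cw)
  have h2 : HasDerivAt (fun z : ℂ => p.eval z) ((Polynomial.derivative p).eval 0)
      ((fun t : ℝ => -(t : ℂ) * cw) 0) := by
    simpa using p.hasDerivAt (0 : ℂ)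
  have h3 : HasDerivAt (fun t : ℝ => p.eval (-(t : ℂ) * cw)) (-cw * (w * c)) 0 := by
    have := h2.scomp (0 : ℝ) h1
    simpa [hp', smul_eq_mul, Function.comp_def] using this
  have hderiv : HasDerivAt f (-c * ‖w‖ ^ 2) 0 := by
    have := (Complex.reCLM.hasFDerivAt.comp_hasDerivAt 0 h3)
    refine this.congr_deriv (Eq.symm ?_)
    have : cw * w = (‖w‖ : ℂ) ^ 2 := by
      rw [hcw, mul_comm, Complex.mul_conj]
      norm_cast
      rw [Complex.normSq_eq_norm_sq]
    show -c * ‖w‖ ^ 2 = (-cw * (w * c)).re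
    have : -cw * (w * c) = ((-c * ‖w‖ ^ 2 : ℝ) : ℂ) := by
      push_cast
      rw [neg_mul, ← mul_assoc, this]
      ring
    rw [this, Complex.ofReal_re]
  have hd_pos : 0 < -c * ‖w‖ ^ 2 :=
    mul_pos (by linarith) (pow_pos (norm_pos_iff.mpr hw) 2)
  -- eventually f t > f 0 = 1 for small t > 0
  have hslope : Filter.Tendsto (slope f 0) (𝓝[≠] 0) (𝓝 (-c * ‖w‖ ^ 2)) :=
    hasDerivAt_iff_tendsto_slope.mp hderiv
  have hev : ∀ᶠ t in 𝓝[>] (0 : ℝ), 0 < slope f 0 t := by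
    have := hslope.mono_left (nhdsWithin_mono 0 (fun t ht => ne_of_gt ht))
    exact this.eventually (eventually_gt_nhds hd_pos)
  have hf0 : f 0 = 1 := by simp [hf, hp0]
  have hev2 : ∀ᶠ t in 𝓝[>] (0 : ℝ), 1 < f t := by
    filter_upwards [hev, self_mem_nhdsWithin] with t ht ht0
    have htpos : (0:ℝ) < t := ht0
    have h' : 0 < (f t - f 0) / t := by simpa [slope_def_field] using ht
    rcases div_pos_iff.mp h' with ⟨ha, _⟩ | ⟨_, hb⟩
    · linarith
    · linarith
  -- pick small t in (0, 1]
  have hmem : Set.Ioc (0:ℝ) 1 ∈ 𝓝[>] (0:ℝ) := by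
    exact Ioc_mem_nhdsGT_of_mem (by constructor <;> norm_num)
  obtain ⟨t, ht1, ht2⟩ := (hev2.and (Filter.eventually_of_mem hmem (fun x hx => hx))).exists
  set z := -(t : ℂ) * cw with hz
  -- z lies in the closed ball of radius ‖w‖ around -cw
  have hzball : z ∈ closure (Metric.ball (-cw) ‖w‖) := by
    rw [closure_ball _ (by simpa using (norm_pos_iff.mpr hw).ne')]
    rw [Metric.mem_closedBall, dist_eq_norm]
    have : z - -cw = (1 - (t:ℂ)) * cw := by ring
    rw [this, norm_mul]
    have hcwn : ‖cw‖ = ‖w‖ := by simp [hcw]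
    rw [hcwn]
    have : ‖(1 - (t:ℂ))‖ ≤ 1 := by
      rw [show (1 - (t:ℂ)) = ((1 - t : ℝ) : ℂ) by push_cast; ring]
      rw [Complex.norm_real, Real.norm_eq_abs, abs_le]
      constructor <;> [linarith [ht2.2]; linarith [ht2.1]]
    nlinarith [norm_nonneg w]
  -- maximum modulus principle
  have hle : ‖p.eval z‖ ≤ 1 := by
    apply Complex.norm_le_of_forall_mem_frontier_norm_le Metric.isBounded_ball
      (p.differentiable.diffContOnCl) _ hzball
    intro x hx
    rw [frontier_ball _ (by simpa using (norm_pos_iff.mpr hw).ne')] at hx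
    rw [Metric.mem_sphere, dist_eq_norm] at hx
    apply h
    rw [show x + cw = x - -cw by ring, hx]
  have : 1 < ‖p.eval z‖ := lt_of_lt_of_le ht1 (by
    calc f t = (p.eval z).re := rfl
    _ ≤ |(p.eval z).re| := le_abs_self _
    _ ≤ ‖p.eval z‖ := Complex.abs_re_le_norm _)
  linarith
end
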